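/- (Capacity invariant of MAA.) Let m, n be positive integers, δ a natural number, and let π₀ > 0, r > 1, v_max ≥ 0 be reals with π₀ · r^δ ≥ v_max. Consider a sequential process over agents i = 1,…,n maintaining slot counts Q⁰, Q¹, …, Qⁿ : {1,…,m} → ℕ with Q⁰_j = 0 for all j, where at step i either the counts are unchanged (agent i unallocated), or agent i selects a start slot s and an interval I_i = [s, s + l_i − 1] ⊆ {1,…,m} satisfying the nonnegative-utility condition v_i(s) ≥ ∑_{j ∈ I_i} π₀ · r^{Q^{i−1}_j} with v_i(s) ≤ v_max, after which Q^i_j = Q^{i−1}_j + 1 for j ∈ I_i and Q^i_j = Q^{i−1}_j otherwise. Then Qⁿ_j ≤ δ + 1 for every slot j. In particular, taking δ = k − 2, the non-dictator agents occupy at most k − 1 units of each slot. -/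

import Mathlib

/-!
A slot already holding `δ + 1` jobs costs `π₀ * r ^ (δ + 1) > π₀ * r ^ δ ≥ v_max` on its own,
so no agent can afford an interval containing it; counts therefore never pass `δ + 1`.
-/

open Finset

section Pricing

variable {ι : Type*} [Fintype ι] {π₀ r : ℝ} {δ : ℕ}

theorem le_of_mul_pow_le_mul_pow (hπ : 0 < π₀) (hr : 1 < r) {a : ℕ}
    (h : π₀ * r ^ a ≤ π₀ * r ^ δ) : a ≤ δ :=
  (pow_le_pow_iff_right₀ hr).mp (le_of_mul_le_mul_left h hπ)

theorem count_le_of_sum_price_le (hπ : 0 < π₀) (hr : 1 < r) {q : ι → ℕ}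
    {p : ι → Prop} [DecidablePred p]
    (hprice : ∑ j ∈ univ.filter p, π₀ * r ^ q j ≤ π₀ * r ^ δ) {j : ι} (hj : p j) :
    q j ≤ δ := by
  have hslot : π₀ * r ^ q j ≤ ∑ t ∈ univ.filter p, π₀ * r ^ q t :=
    single_le_sum (fun t _ => (mul_pos hπ (pow_pos (zero_lt_one.trans hr) _)).le)
      (mem_filter.mpr ⟨mem_univ j, hj⟩)
  exact le_of_mul_pow_le_mul_pow hπ hr (hslot.trans hprice)

theorem count_le_succ_of_allocate (hπ : 0 < π₀) (hr : 1 < r) {q q' : ι → ℕ}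
    {p : ι → Prop} [DecidablePred p]
    (hprice : ∑ j ∈ univ.filter p, π₀ * r ^ q j ≤ π₀ * r ^ δ)
    (hq : ∀ j, q j ≤ δ + 1) (hq' : ∀ j, q' j = q j + if p j then 1 else 0) (j : ι) :
    q' j ≤ δ + 1 := by
  rw [hq' j]
  split_ifs with hj
  · have := count_le_of_sum_price_le hπ hr hprice hj
    omega
  · exact hq j

end Pricing

theorem maa_capacity_invariant_general (m n : ℕ) (δ : ℕ)
    (π₀ r vmax : ℝ) (hπ : 0 < π₀) (hr : 1 < r)
    (hbound : vmax ≤ π₀ * r ^ δ)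
    (Q : ℕ → Fin m → ℕ) (hQ0 : ∀ j, Q 0 j = 0)
    (hstep : ∀ i < n,
      (Q (i + 1) = Q i) ∨
      ∃ (s : Fin m) (li : ℕ), 1 ≤ li ∧ (s : ℕ) + li ≤ m ∧
        ∃ val : ℝ, val ≤ vmax ∧
          (∑ j ∈ Finset.univ.filter (fun t : Fin m => s ≤ t ∧ (t : ℕ) < (s : ℕ) + li),
              π₀ * r ^ (Q i j)) ≤ val ∧
          ∀ j : Fin m,
            Q (i + 1) j = Q i j + (if s ≤ j ∧ (j : ℕ) < (s : ℕ) + li then 1 else 0)) :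
    ∀ j : Fin m, Q n j ≤ δ + 1 := by
  suffices h : ∀ i ≤ n, ∀ j, Q i j ≤ δ + 1 from h n le_rfl
  intro i
  induction i with
  | zero => intro _ j; simp [hQ0 j]
  | succ i ih =>
    intro hi
    rcases hstep i hi with hidle | ⟨s, li, -, -, val, hval, hprice, hupd⟩
    · rw [hidle]
      exact ih (Nat.le_of_succ_le hi)
    · exact count_le_succ_of_allocate hπ hr (hprice.trans (hval.trans hbound))
        (ih (Nat.le_of_succ_le hi)) hupd

/-- Capacity invariant of MAA: in the sequential process where agent `i` either stays
unallocated (counts unchanged) or takes an interval `[s, s + lᵢ - 1]` of slots whose total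
current price `∑_{j ∈ I} π₀ · r^{Q j}` is at most her value for starting at `s` (itself at
most `v_max`), the final occupancy of every slot is at most `δ + 1`, provided
`π₀ · r^δ ≥ v_max`. -/
theorem maa_capacity_invariant (m n : ℕ) (hm : 0 < m) (hn : 0 < n) (δ : ℕ)
    (π₀ r vmax : ℝ) (hπ : 0 < π₀) (hr : 1 < r) (hvmax : 0 ≤ vmax)
    (hbound : vmax ≤ π₀ * r ^ δ)
    (Q : ℕ → Fin m → ℕ) (hQ0 : ∀ j, Q 0 j = 0)
    (hstep : ∀ i < n,
      (Q (i + 1) = Q i) ∨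
      ∃ (s : Fin m) (li : ℕ), 1 ≤ li ∧ (s : ℕ) + li ≤ m ∧
        ∃ val : ℝ, val ≤ vmax ∧
          (∑ j ∈ Finset.univ.filter (fun t : Fin m => s ≤ t ∧ (t : ℕ) < (s : ℕ) + li),
              π₀ * r ^ (Q i j)) ≤ val ∧
          ∀ j : Fin m,
            Q (i + 1) j = Q i j + (if s ≤ j ∧ (j : ℕ) < (s : ℕ) + li then 1 else 0)) :
    ∀ j : Fin m, Q n j ≤ δ + 1 :=
  maa_capacity_invariant_general m n δ π₀ r vmax hπ hr hbound Q hQ0 hstep
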